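/- arXiv:1802.10006 — 3 statements merged into one kernel-verified Lean document; each statement's English description precedes it below -/
import Mathlib

section
/- Let X be a connected finite T₀-space and let A be a non-empty subspace of X. Then the inclusion map i : A → X is a Hurewicz cofibration if and only if A is a dbp–retract of X. -/
open unitInterval

set_option autoImplicit false

universe u v

/-- The specialization preorder: `x ≤ y` iff every open set containing `y` contains `x`. -/
def specLE {X : Type*} [TopologicalSpace X] (x y : X) : Prop :=
  ∀ U : Set X, IsOpen U → y ∈ U → x ∈ U

/-- A continuous map `i : A → X` is a (Hurewicz) cofibration iff it has the homotopy
extension property with respect to all topological spaces. -/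
def IsCofibration {A : Type*} {X : Type*} [TopologicalSpace A] [TopologicalSpace X]
    (i : C(A, X)) : Prop :=
  ∀ (Z : Type v) [TopologicalSpace Z] (f : C(X, Z)) (H : C(A × I, Z)),
    (∀ a, H (a, 0) = f (i a)) →
    ∃ G : C(X × I, Z),
      (∀ x, G (x, 0) = f x) ∧ ∀ a t, G (i a, t) = H (a, t)

/-- `x` is a down beat point of the subspace `S`:
the set of points of `S` strictly below `x` has a maximum. -/
def IsDownBeatPoint {X : Type*} [TopologicalSpace X] (S : Set X) (x : X) : Prop :=
  x ∈ S ∧ ∃ m ∈ S, m ≠ x ∧ specLE m x ∧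
    ∀ z ∈ S, z ≠ x → specLE z x → specLE z m

/-- `T` is a dbp–retract of `S`: `T` is obtained from `S` by successively
removing down beat points. -/
inductive IsDbpRetract {X : Type*} [TopologicalSpace X] : Set X → Set X → Prop
  | refl (S : Set X) : IsDbpRetract S S
  | step {S T : Set X} (x : X) (hx : IsDownBeatPoint S x)
      (h : IsDbpRetract (S \ {x}) T) : IsDbpRetract S T

/-- The minimal open set containing `x` (in a finite space): the intersection of all
open sets containing `x`. -/
def minOpen {X : Type*} [TopologicalSpace X] (x : X) : Set X :=
  ⋂₀ {U : Set X | IsOpen U ∧ x ∈ U}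

/-!
Both conditions are equivalent to the existence of a retraction `r` of `X` onto `A` that preserves
specialization and satisfies `r x ⤳ x`. Such an `r` is the composite of the maps sending each
removed down beat point to the maximum below it; conversely, a minimal point `x` of `X \ A` is a
down beat point, the maximum below it being `r x`.

Given `r`, a homotopy `H` on `A` starting at `f` extends to `X` by `H (r x, t)` for `t ≠ 0` and
`f x` at `t = 0`. On a finite space continuity only has to be checked in `t` and along
specializations in `x`, and the jump at `t = 0` goes from `f (r x)` up to `f x`. Conversely, the
homotopy extension property for `X × {0} ∪ A × I` gives a retraction of `X × I` onto it; as `X` is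
finite and connected it preserves the `I`-coordinate, and at a small time `t ≠ 0` it restricts to
such an `r`.
-/

open Filter Topology Set

section FiniteSpaces

variable {X : Type*} [TopologicalSpace X]

theorem specLE_iff_specializes {x y : X} : specLE x y ↔ x ⤳ y :=
  specializes_iff_forall_open.symm

theorem eventually_specializes_nhds [AlexandrovDiscrete X] (x : X) : ∀ᶠ y in 𝓝 x, y ⤳ x := by
  filter_upwards [(isOpen_nhdsKer (s := {x})).mem_nhds (mem_nhdsKer_singleton.2 specializes_rfl)]
    with y hy using mem_nhdsKer_singleton.1 hy

theorem PreconnectedSpace.constant_of_finite {Y : Type*} [TopologicalSpace Y] [T1Space Y]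
    [PreconnectedSpace X] [Finite X] {g : X → Y} (hg : Continuous g) (x y : X) : g x = g y :=
  (isPreconnected_univ (α := X)).constant_of_mapsTo (finite_range g).isDiscrete hg.continuousOn
    (fun x _ => mem_range_self x) trivial trivial

theorem continuous_prod_of_finite {T Z : Type*} [TopologicalSpace T] [TopologicalSpace Z]
    [Finite X] {g : X × T → Z} (hcont : ∀ x, Continuous fun t => g (x, t))
    (hspec : ∀ x y t, x ⤳ y → g (x, t) ⤳ g (y, t)) : Continuous g := by
  refine continuous_iff_continuousAt.2 fun ⟨y, t⟩ W hW => ?_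
  change ∀ᶠ p in 𝓝 (y, t), g p ∈ W
  have hfibres : ∀ᶠ s in 𝓝 t, ∀ x, x ⤳ y → g (x, s) ∈ W := eventually_all.2 fun x => by
    by_cases hxy : x ⤳ y
    · have hx : Tendsto (fun s => g (x, s)) (𝓝 t) (𝓝 (g (y, t))) :=
        ((hcont x).tendsto t).mono_right (hspec x y t hxy)
      exact (hx.eventually_mem hW).mono fun _ hs _ => hs
    · exact .of_forall fun _ h => absurd h hxy
  rw [nhds_prod_eq]
  exact ((eventually_specializes_nhds y).prod_mk hfibres).mono fun p hp => hp.2 p.1 hp.1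

end FiniteSpaces

section LowerRetraction

variable {X : Type*} [TopologicalSpace X]

structure IsLowerRetraction (S A : Set X) (r : X → X) : Prop where
  subset : A ⊆ S
  mapsTo : MapsTo r S A
  eq_self : ∀ a ∈ A, r a = a
  specializes : ∀ x ∈ S, r x ⤳ x
  monotone : ∀ x ∈ S, ∀ y ∈ S, x ⤳ y → r x ⤳ r y

namespace IsLowerRetraction

variable {S T A : Set X} {r s : X → X}

theorem id (S : Set X) : IsLowerRetraction S S id :=
  ⟨subset_rfl, mapsTo_id S, fun _ _ => rfl, fun _ _ => specializes_rfl, fun _ _ _ _ h => h⟩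

theorem comp (hr : IsLowerRetraction T A r) (hs : IsLowerRetraction S T s) :
    IsLowerRetraction S A (r ∘ s) where
  subset := hr.subset.trans hs.subset
  mapsTo := hr.mapsTo.comp hs.mapsTo
  eq_self a ha := by rw [Function.comp_apply, hs.eq_self a (hr.subset ha), hr.eq_self a ha]
  specializes x hx := (hr.specializes _ (hs.mapsTo hx)).trans (hs.specializes x hx)
  monotone x hx y hy h := hr.monotone _ (hs.mapsTo hx) _ (hs.mapsTo hy) (hs.monotone x hx y hy h)

theorem mono (hr : IsLowerRetraction S A r) (hAT : A ⊆ T) (hTS : T ⊆ S) :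
    IsLowerRetraction T A r where
  subset := hAT
  mapsTo := hr.mapsTo.mono_left hTS
  eq_self := hr.eq_self
  specializes x hx := hr.specializes x (hTS hx)
  monotone x hx y hy := hr.monotone x (hTS hx) y (hTS hy)

end IsLowerRetraction

theorem IsDownBeatPoint.exists_isLowerRetraction {S : Set X} {x : X} (hx : IsDownBeatPoint S x) :
    ∃ s, IsLowerRetraction S (S \ {x}) s := by
  classical
  obtain ⟨hxS, m, hmS, hmx, hm, hmax⟩ := hx
  simp only [specLE_iff_specializes] at hm hmax
  refine ⟨fun y => if y = x then m else y, sdiff_subset, fun y hy => ?_, fun y hy => ?_,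
    fun y _ => ?_, fun y hy z hz hyz => ?_⟩
  · split_ifs with hyx
    exacts [⟨hmS, hmx⟩, ⟨hy, hyx⟩]
  · exact if_neg hy.2
  · split_ifs with hyx
    exacts [hyx ▸ hm, specializes_rfl]
  · split_ifs with hyx hzx hzx
    · exact specializes_rfl
    · exact hm.trans (hyx ▸ hyz)
    · exact hmax y hy hyx (hzx ▸ hyz)
    · exact hyz

theorem IsDbpRetract.exists_isLowerRetraction {S A : Set X} (h : IsDbpRetract S A) :
    ∃ r, IsLowerRetraction S A r := by
  induction h with
  | refl S => exact ⟨id, .id S⟩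
  | step x hx _ ih =>
    obtain ⟨r, hr⟩ := ih
    obtain ⟨s, hs⟩ := hx.exists_isLowerRetraction
    exact ⟨r ∘ s, hr.comp hs⟩

variable [Finite X] [T0Space X]

theorem IsLowerRetraction.exists_isDownBeatPoint {S A : Set X} {r : X → X}
    (hr : IsLowerRetraction S A r) (hSA : ¬S ⊆ A) : ∃ x ∉ A, IsDownBeatPoint S x := by
  obtain ⟨x, ⟨hxS, hxA⟩, hmin⟩ :=
    (toFinite (S \ A)).exists_minimalFor 𝓝 _ (nonempty_of_not_subset hSA)
  have hrx : r x ∈ A := hr.mapsTo hxS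
  refine ⟨x, hxA, hxS, r x, hr.subset hrx, ne_of_mem_of_not_mem hrx hxA,
    specLE_iff_specializes.2 (hr.specializes x hxS), fun z hzS hzx hzle => ?_⟩
  rw [specLE_iff_specializes] at hzle ⊢
  have hzA : z ∈ A := by_contra fun hzA => hzx (hzle.antisymm (hmin ⟨hzS, hzA⟩ hzle)).eq
  simpa only [hr.eq_self z hzA] using hr.monotone z hzS x hxS hzle

theorem IsLowerRetraction.isDbpRetract {S A : Set X} {r : X → X} (hr : IsLowerRetraction S A r) :
    IsDbpRetract S A := by
  induction S using WellFoundedLT.induction with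
  | _ S ih =>
    by_cases hSA : S ⊆ A
    · exact hr.subset.antisymm hSA ▸ .refl A
    · obtain ⟨x, hxA, hx⟩ := hr.exists_isDownBeatPoint hSA
      exact .step x hx (ih _ (sdiff_singleton_ssubset.2 hx.1)
        (hr.mono (subset_sdiff_singleton hr.subset hxA) sdiff_subset))

end LowerRetraction

section Cofibration

variable {X : Type*} [TopologicalSpace X]

theorem IsLowerRetraction.isCofibration [Finite X] {A : Set X} {r : X → X}
    (hr : IsLowerRetraction univ A r) :
    IsCofibration.{v} (⟨Subtype.val, continuous_subtype_val⟩ : C(A, X)) := by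
  classical
  intro Z _ f H hH
  let rA : X → A := fun x => ⟨r x, hr.mapsTo (mem_univ x)⟩
  have hrA : ∀ x y, x ⤳ y → rA x ⤳ rA y := fun x y h =>
    (subtype_specializes_iff _ _).2 (hr.monotone x trivial y trivial h)
  let G : X × I → Z := fun p => Function.update (fun t => H (rA p.1, t)) 0 (f p.1) p.2
  have hG : Continuous G := by
    refine continuous_prod_of_finite (fun x => ?_) fun x y t hxy => ?_
    · have hfibre : Continuous fun t => H (rA x, t) := by fun_prop
      show Continuous (Function.update (fun t => H (rA x, t)) 0 (f x))
      refine continuousOn_univ.1 (continuousOn_update_iff.2 ⟨hfibre.continuousOn, fun _ => ?_⟩)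
      have hjump : H (rA x, 0) ⤳ f x := by
        rw [hH (rA x)]
        exact (hr.specializes x trivial).map f.continuous
      exact ((hfibre.tendsto 0).mono_left nhdsWithin_le_nhds).mono_right hjump
    · by_cases ht : t = 0
      · simpa [G, ht] using hxy.map f.continuous
      · simpa [G, ht] using ((hrA x y hxy).prod specializes_rfl).map H.continuous
  refine ⟨⟨G, hG⟩, fun x => Function.update_self (0 : I) (f x) fun t => H (rA x, t),
    fun a t => ?_⟩
  have hra : rA a = a := Subtype.ext (hr.eq_self a a.2)
  by_cases ht : t = 0
  · simp [G, ht, hH]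
  · simp [G, ht, hra]

theorem IsCofibration.exists_retraction [Small.{v} X] {A : Set X}
    (h : IsCofibration.{v} (⟨Subtype.val, continuous_subtype_val⟩ : C(A, X))) :
    ∃ R : C(X × I, X × I), (∀ x, R (x, 0) = (x, 0)) ∧ (∀ a ∈ A, ∀ t, R (a, t) = (a, t)) ∧
      ∀ p, (R p).2 = 0 ∨ (R p).1 ∈ A := by
  let e := Shrink.homeomorph.{v} {p : X × I // p.2 = 0 ∨ p.1 ∈ A}
  obtain ⟨G, hG0, hGA⟩ := h (Shrink.{v} {p : X × I // p.2 = 0 ∨ p.1 ∈ A})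
    ⟨fun x => e ⟨(x, 0), .inl rfl⟩, by fun_prop⟩
    ⟨fun p => e ⟨(p.1, p.2), .inr p.1.2⟩, by fun_prop⟩ fun _ => rfl
  refine ⟨⟨fun p => (e.symm (G p)).1, by fun_prop⟩, fun x => ?_, fun a ha t => ?_,
    fun p => (e.symm (G p)).2⟩
  · simp [hG0]
  · simpa using congrArg (fun z => (e.symm z).1) (hGA ⟨a, ha⟩ t)

theorem IsCofibration.exists_isLowerRetraction [Finite X] [ConnectedSpace X] {A : Set X}
    (hA : A.Nonempty) (h : IsCofibration.{v} (⟨Subtype.val, continuous_subtype_val⟩ : C(A, X))) :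
    ∃ r, IsLowerRetraction univ A r := by
  obtain ⟨R, hR0, hRA, hRmem⟩ := h.exists_retraction
  obtain ⟨a, ha⟩ := hA
  have hsnd : ∀ x t, (R (x, t)).2 = t := fun x t => by
    rw [PreconnectedSpace.constant_of_finite (g := fun x => (R (x, t)).2) (by fun_prop) x a,
      hRA a ha]
  have hsmall : ∀ᶠ t in 𝓝 0, ∀ x, (R (x, t)).1 ⤳ x := eventually_all.2 fun x => by
    have hx : Tendsto (fun t => (R (x, t)).1) (𝓝 0) (𝓝 x) := by
      simpa only [hR0] using (show Continuous fun t => (R (x, t)).1 by fun_prop).tendsto 0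
    exact hx.eventually (eventually_specializes_nhds x)
  obtain ⟨t, hbelow, ht⟩ :=
    ((hsmall.filter_mono nhdsWithin_le_nhds).and (self_mem_nhdsWithin (s := {0}ᶜ))).exists
  refine ⟨fun x => (R (x, t)).1, subset_univ A, fun x _ => ?_, fun a ha => by simp [hRA a ha],
    fun x _ => hbelow x, fun x _ y _ hxy => ?_⟩
  · exact (hRmem (x, t)).resolve_left (by rwa [hsnd])
  · exact (((hxy.prod specializes_rfl).map R.continuous).map continuous_fst)

end Cofibration

/-- Let `X` be a connected finite T₀-space and `A` a non-empty subspace.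
The inclusion `i : A ↪ X` is a Hurewicz cofibration iff `A` is a dbp–retract of `X`. -/
theorem cofibration_iff_dbpRetract
    {X : Type u} [TopologicalSpace X] [Finite X] [T0Space X] [ConnectedSpace X]
    (A : Set X) (hA : A.Nonempty) :
    IsCofibration (⟨Subtype.val, continuous_subtype_val⟩ : C(A, X)) ↔
      IsDbpRetract (Set.univ : Set X) A := by
  refine ⟨fun h => ?_, fun h => ?_⟩
  · obtain ⟨r, hr⟩ := h.exists_isLowerRetraction hA
    exact hr.isDbpRetract
  · obtain ⟨r, hr⟩ := h.exists_isLowerRetraction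
    exact hr.isCofibration
end

section
/- Let Y be a finite T₀-space, let X be a dbp–retract of Y and let A ⊆ X. Then A is a dbp–retract of X if and only if A is a dbp–retract of Y. -/
/-!
Removing down beat points commutes: if `x ≠ y` are down beat points of `S`, then `x` is still
a down beat point of `S \ {y}` (its maximal lower point is either unchanged or, if it was `y`,
replaced by the maximal lower point of `y`). Hence a removal sequence from `S` to `A` can be
rearranged to start with any down beat point of `S` outside `A`, and following the chain from
`Y` to `X` one point at a time turns a removal sequence from `Y` to `A` into one from `X` to `A`.
-/

open unitInterval

set_option autoImplicit false

universe u v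

section DbpRetract

variable {Y : Type u} [TopologicalSpace Y]

theorem specLE_iff_specializes_s6 {a b : Y} : specLE a b ↔ a ⤳ b :=
  specializes_iff_forall_open.symm

theorem specLE.trans {a b c : Y} (hab : specLE a b) (hbc : specLE b c) : specLE a c :=
  fun U hU hc => hab U hU (hbc U hU hc)

theorem specLE.antisymm [T0Space Y] {a b : Y} (hab : specLE a b) (hba : specLE b a) : a = b :=
  ((specLE_iff_specializes_s6.mp hab).antisymm (specLE_iff_specializes_s6.mp hba)).eq

theorem IsDownBeatPoint.diff_singleton [T0Space Y] {S : Set Y} {x y : Y}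
    (hx : IsDownBeatPoint S x) (hy : IsDownBeatPoint S y) (hxy : x ≠ y) :
    IsDownBeatPoint (S \ {y}) x := by
  obtain ⟨hxS, m, hmS, hmx, hmx_le, hm_max⟩ := hx
  by_cases hmy : m = y
  · subst hmy
    obtain ⟨-, m', hm'S, hm'm, hm'm_le, hm'_max⟩ := hy
    have hm'x : m' ≠ x := by
      rintro rfl
      exact hxy (hm'm_le.antisymm hmx_le)
    exact ⟨⟨hxS, hxy⟩, m', ⟨hm'S, hm'm⟩, hm'x, hm'm_le.trans hmx_le,
      fun z hz hzx hzx_le => hm'_max z hz.1 hz.2 (hm_max z hz.1 hzx hzx_le)⟩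
  · exact ⟨⟨hxS, hxy⟩, m, ⟨hmS, hmy⟩, hmx, hmx_le,
      fun z hz hzx hzx_le => hm_max z hz.1 hzx hzx_le⟩

theorem IsDbpRetract.subset {S T : Set Y} (h : IsDbpRetract S T) : T ⊆ S := by
  induction h with
  | refl S => exact subset_rfl
  | step x hx h ih => exact ih.trans Set.sdiff_subset

theorem IsDbpRetract.trans {S T U : Set Y} (hST : IsDbpRetract S T) (hTU : IsDbpRetract T U) :
    IsDbpRetract S U := by
  induction hST with
  | refl S => exact hTU
  | step x hx h ih => exact .step x hx (ih hTU)

theorem IsDbpRetract.diff_singleton [T0Space Y] {S A : Set Y} {x : Y} (h : IsDbpRetract S A)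
    (hx : IsDownBeatPoint S x) (hxA : x ∉ A) : IsDbpRetract (S \ {x}) A := by
  induction h generalizing x with
  | refl S => exact absurd hx.1 hxA
  | @step S T y hy h ih =>
    by_cases hxy : x = y
    · subst hxy
      exact h
    have hyx : IsDownBeatPoint (S \ {x}) y := hy.diff_singleton hx (Ne.symm hxy)
    have hdiff_comm : (S \ {y}) \ {x} = (S \ {x}) \ {y} := Set.sdiff_sdiff_comm
    exact .step y hyx (hdiff_comm ▸ ih (hx.diff_singleton hy hxy) hxA)

theorem IsDbpRetract.of_subset [T0Space Y] {S X A : Set Y} (hX : IsDbpRetract S X)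
    (hA : IsDbpRetract S A) (hAX : A ⊆ X) : IsDbpRetract X A := by
  induction hX with
  | refl S => exact hA
  | step y hy hX ih =>
    exact ih (hA.diff_singleton hy fun hyA => (hX.subset (hAX hyA)).2 rfl) hAX

end DbpRetract

theorem dbpRetract_iff_dbpRetract_univ_general
    {Y : Type u} [TopologicalSpace Y] [T0Space Y]
    (X A : Set Y) (hX : IsDbpRetract (Set.univ : Set Y) X) (hAX : A ⊆ X) :
    IsDbpRetract X A ↔ IsDbpRetract (Set.univ : Set Y) A :=
  ⟨hX.trans, fun hA => hX.of_subset hA hAX⟩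

/-- Let `Y` be a finite T₀-space, `X` a dbp–retract of `Y` and `A ⊆ X`.
Then `A` is a dbp–retract of `X` iff `A` is a dbp–retract of `Y`. -/
theorem dbpRetract_iff_dbpRetract_univ
    {Y : Type u} [TopologicalSpace Y] [Finite Y] [T0Space Y]
    (X A : Set Y) (hX : IsDbpRetract (Set.univ : Set Y) X) (hAX : A ⊆ X) :
    IsDbpRetract X A ↔ IsDbpRetract (Set.univ : Set Y) A :=
  dbpRetract_iff_dbpRetract_univ_general X A hX hAX
end

section
/- Let X be a connected non-empty finite topological space and let x₀ ∈ X. Then the inclusion {x₀} ↪ X is a Hurewicz cofibration (i.e. (X, x₀) is well-pointed) if and only if x₀ ≤ x in the specialization preorder for every x ∈ X. In particular, if X is moreover T₀, then (X, x₀) is well-pointed if and only if x₀ is the minimum of X in the specialization order. -/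
open unitInterval

set_option autoImplicit false

universe u v

/-! Backwards, extend by `f` at time `0` and by `H (x₀, ·)` at positive times: this is continuous
because every nonempty open set contains `x₀`. Forwards, test the homotopy extension property
against the subspace `{(t, p) | p → t = 0}` of `I × Prop` (Sierpiński topology on `Prop`), with
`f x = (0, x ∈ U)` for an open `U ∌ x₀` and `H (x₀, t) = (t, False)`. Since `X` is connected and
finite, the time coordinate of an extension `G` cannot depend on `x`, so `G (x, t) = (t, False)`
for `t ≠ 0`; continuity at `(x, 0)` then forces `x ∉ U`. -/

theorem Continuous.apply_eq_of_finite {X Y : Type*} [TopologicalSpace X] [TopologicalSpace Y]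
    [PreconnectedSpace X] [Finite X] [T1Space Y] {f : X → Y} (hf : Continuous f) (a b : X) :
    f a = f b :=
  congrArg Subtype.val
    (PreconnectedSpace.constant inferInstance hf.rangeFactorization (x := a) (y := b))

section

variable {X : Type*} [TopologicalSpace X] {x₀ : X}

theorem isCofibration_singleton_of_forall_specLE (h : ∀ x, specLE x₀ x) :
    IsCofibration.{v} (⟨Subtype.val, continuous_subtype_val⟩ : C(({x₀} : Set X), X)) := by
  intro Z _ f H hH
  let a₀ : ({x₀} : Set X) := ⟨x₀, rfl⟩
  let g : X × I → Z := fun p => if p.2 = 0 then f p.1 else H (a₀, p.2)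
  have hg : Continuous g := by
    refine continuous_def.2 fun U hU => ?_
    set A := f ⁻¹' U
    set B := (fun t : I => H (a₀, t)) ⁻¹' U
    have hA : IsOpen A := hU.preimage f.continuous
    have hB : IsOpen B := hU.preimage (by fun_prop)
    have hAB : ∀ x ∈ A, (0 : I) ∈ B := fun x hx => by
      show H (a₀, 0) ∈ U
      exact hH a₀ ▸ h x A hA hx
    have : g ⁻¹' U = A ×ˢ B ∪ Set.univ ×ˢ (B \ {0}) := by
      ext ⟨x, t⟩
      by_cases ht : t = 0
      · subst ht; simpa [g, A] using hAB x
      · simp [g, ht, B]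
    rw [this]
    exact (hA.prod hB).union (isOpen_univ.prod (hB.sdiff isClosed_singleton))
  refine ⟨⟨g, hg⟩, fun x => if_pos rfl, fun a t => ?_⟩
  obtain rfl : a = a₀ := Subtype.ext a.2
  by_cases ht : t = 0
  · subst ht; exact (if_pos rfl).trans (hH a₀).symm
  · exact if_neg ht

theorem mem_of_isCofibration_singleton [PreconnectedSpace X] [Finite X]
    (hc : IsCofibration.{v} (⟨Subtype.val, continuous_subtype_val⟩ : C(({x₀} : Set X), X)))
    {U : Set X} (hU : IsOpen U) {x : X} (hx : x ∈ U) : x₀ ∈ U := by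
  by_contra hx₀
  let Z : Set (I × Prop) := {p | p.2 → p.1 = 0}
  let f : C(X, ULift.{v} Z) :=
    ⟨fun y => ⟨(0, y ∈ U), fun _ => rfl⟩, Homeomorph.ulift.symm.continuous.comp
      ((continuous_const.prodMk (continuous_Prop.2 hU)).subtype_mk _)⟩
  let H : C(({x₀} : Set X) × I, ULift.{v} Z) :=
    ⟨fun p => ⟨(p.2, False), False.elim⟩, Homeomorph.ulift.symm.continuous.comp
      ((continuous_snd.prodMk continuous_const).subtype_mk _)⟩
  have hH : ∀ a, H (a, 0) = f a := fun a => by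
    have ha : (a : X) ∉ U := by rwa [Set.mem_singleton_iff.1 a.2]
    exact ULift.ext _ _ (Subtype.ext (Prod.ext rfl (propext ⟨False.elim, ha⟩)))
  obtain ⟨G, hG0, hGH⟩ := hc (ULift Z) f H hH
  let γ : X × I → I × Prop := fun q => (G q).down
  have hγ : Continuous γ :=
    continuous_subtype_val.comp (Homeomorph.ulift.continuous.comp G.continuous)
  have htime : ∀ t, (γ (x, t)).1 = t := fun t =>
    ((hγ.fst.comp (Continuous.prodMk_left t)).apply_eq_of_finite x x₀).trans
      (congrArg (fun z => z.down.1.1) (hGH ⟨x₀, rfl⟩ t))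
  have hsingleton : {t | (γ (x, t)).2} = {0} := by
    ext t
    refine ⟨fun ht => htime t ▸ (G (x, t)).down.2 ht, ?_⟩
    rintro rfl
    show (G (x, 0)).down.1.2
    rw [hG0 x]
    exact hx
  exact not_isOpen_singleton (0 : I) <| hsingleton ▸
    continuous_Prop.1 (continuous_snd.comp (hγ.comp (Continuous.prodMk_right x)))

end

/-- Let `X` be a connected non-empty finite topological space and
`x₀ ∈ X`. Then `(X, x₀)` is well-pointed (the inclusion `{x₀} ↪ X` is a Hurewicz
cofibration) iff `x₀ ≤ x` in the specialization preorder for every `x ∈ X`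
(for `X` T₀ this says exactly that `x₀` is the minimum of `X`). -/
theorem wellPointed_iff_min
    {X : Type u} [TopologicalSpace X] [Finite X] [ConnectedSpace X] (x₀ : X) :
    IsCofibration (⟨Subtype.val, continuous_subtype_val⟩ : C(({x₀} : Set X), X)) ↔
      ∀ x : X, specLE x₀ x :=
  ⟨fun hc _ _ hU hx => mem_of_isCofibration_singleton hc hU hx,
    isCofibration_singleton_of_forall_specLE⟩
end
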